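/- arXiv:2103.07071 — 2 statements merged into one kernel-verified Lean document; each statement's English description precedes it below -/
import Mathlib

section
/- Let X be a real Banach space and let μ be a convex measure of noncompactness on X. Then compact convex sets are negligible for μ: μ(B ∪ C) = μ(B) for every nonempty bounded subset B of X and every nonempty compact convex subset C of X. -/
/-!
Fix `c ∈ B` and `0 < l < 1`, and write `h r` for the homothety with centre `c` and ratio `r`.
Every point of `B ∪ C` is `l • a + (1 - l) • q` with `a ∈ h l⁻¹ '' B` and `q` in the compact set
`h (1 - l)⁻¹ '' insert c C`, so convexity of `μ`, together with `μ = 0` on compact sets, gives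
`μ (B ∪ C) ≤ l * μ (h l⁻¹ '' B)`. For `1 ≤ s ≤ 2` the point `h s x` is the convex combination
`(2 - s) • x + (s - 1) • h 2 x`, whence `μ (B ∪ C) ≤ (2 * l - 1) * μ B + (1 - l) * μ (h 2 '' B)`,
and letting `l → 1` yields `μ (B ∪ C) ≤ μ B`.
-/

open Set Bornology Pointwise

structure IsConvexMNC (X : Type*) [NormedAddCommGroup X] [NormedSpace ℝ X]
    (μ : Set X → ℝ) : Prop where
  nonneg : ∀ B : Set X, B.Nonempty → IsBounded B → 0 ≤ μ B
  eq_zero_iff : ∀ B : Set X, B.Nonempty → IsBounded B →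
    (μ B = 0 ↔ IsCompact (closure B))
  mono : ∀ A B : Set X, B.Nonempty → IsBounded A → B ⊆ A → μ B ≤ μ A
  convexHull_inv : ∀ B : Set X, B.Nonempty → IsBounded B → μ (convexHull ℝ B) = μ B
  convex : ∀ A B : Set X, A.Nonempty → B.Nonempty → IsBounded A → IsBounded B →
    ∀ l : ℝ, 0 ≤ l → l ≤ 1 → μ (l • A + (1 - l) • B) ≤ l * μ A + (1 - l) * μ B

open Filter Topology AffineMap

section Homothety

variable {𝕜 E : Type*}

theorem lipschitzWith_homothety [NormedField 𝕜] [SeminormedAddCommGroup E] [NormedSpace 𝕜 E]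
    (c : E) (r : 𝕜) : LipschitzWith ‖r‖₊ (homothety c r) :=
  LipschitzWith.of_dist_le_mul fun x y => by
    simp [homothety_apply, dist_eq_norm, ← smul_sub, norm_smul]

variable [Field 𝕜] [AddCommGroup E] [Module 𝕜 E]

theorem smul_homothety_inv_add_smul {a b : 𝕜} (ha : a ≠ 0) (hab : a + b = 1) (c x : E) :
    a • homothety c a⁻¹ x + b • c = x := by
  obtain rfl : b = 1 - a := eq_sub_of_add_eq' hab
  simp [homothety_apply, smul_smul, ha, sub_smul]

theorem homothety_eq_smul_add_smul_homothety_two (c x : E) (s : 𝕜) :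
    homothety c s x = (2 - s) • x + (s - 1) • homothety c (2 : 𝕜) x := by
  simp only [homothety_apply, vsub_eq_sub, vadd_eq_add]
  module

theorem union_subset_smul_homothety_add_smul_homothety {B C : Set E} {c : E} (hc : c ∈ B)
    {l : 𝕜} (hl₀ : l ≠ 0) (hl₁ : l ≠ 1) :
    B ∪ C ⊆ l • homothety c l⁻¹ '' B + (1 - l) • homothety c (1 - l)⁻¹ '' insert c C := by
  rintro x (hx | hx)
  · have h := add_mem_add (smul_mem_smul_set (a := l) (mem_image_of_mem (homothety c l⁻¹) hx))
      (smul_mem_smul_set (a := 1 - l) (mem_image_of_mem (homothety c (1 - l)⁻¹) (mem_insert c C)))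
    rwa [homothety_apply_same, smul_homothety_inv_add_smul hl₀ (by ring)] at h
  · have h := add_mem_add (smul_mem_smul_set (a := l) (mem_image_of_mem (homothety c l⁻¹) hc))
      (smul_mem_smul_set (a := 1 - l)
        (mem_image_of_mem (homothety c (1 - l)⁻¹) (mem_insert_of_mem c hx)))
    rwa [homothety_apply_same, add_comm (l • c),
      smul_homothety_inv_add_smul (sub_ne_zero.mpr hl₁.symm) (by ring)] at h

end Homothety

namespace IsConvexMNC

variable {X : Type*} [NormedAddCommGroup X] [NormedSpace ℝ X] {μ : Set X → ℝ}

theorem eq_zero_of_isCompact (hμ : IsConvexMNC X μ) {K : Set X} (hKne : K.Nonempty)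
    (hK : IsCompact K) : μ K = 0 :=
  (hμ.eq_zero_iff K hKne hK.isBounded).mpr (by rwa [hK.isClosed.closure_eq])

theorem le_of_subset_smul_add_smul (hμ : IsConvexMNC X μ) {S A Q : Set X} (hS : S.Nonempty)
    (hAne : A.Nonempty) (hQne : Q.Nonempty) (hA : IsBounded A) (hQ : IsBounded Q)
    {a b : ℝ} (ha : 0 ≤ a) (hb : 0 ≤ b) (hab : a + b = 1) (hSAQ : S ⊆ a • A + b • Q) :
    μ S ≤ a * μ A + b * μ Q := by
  obtain rfl : b = 1 - a := by linarith
  exact (hμ.mono _ _ hS (isBounded_add (hA.smul₀ a) (hQ.smul₀ _)) hSAQ).trans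
    (hμ.convex A Q hAne hQne hA hQ a ha (by linarith))

theorem homothety_image_le (hμ : IsConvexMNC X μ) {B : Set X} (hBne : B.Nonempty)
    (hB : IsBounded B) (c : X) {s : ℝ} (hs₁ : 1 ≤ s) (hs₂ : s ≤ 2) :
    μ (homothety c s '' B) ≤ (2 - s) * μ B + (s - 1) * μ (homothety c (2 : ℝ) '' B) := by
  refine hμ.le_of_subset_smul_add_smul (hBne.image _) hBne (hBne.image _) hB
    ((lipschitzWith_homothety c (2 : ℝ)).isBounded_image hB) (by linarith) (by linarith)
    (by ring) ?_
  rintro _ ⟨x, hx, rfl⟩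
  rw [homothety_eq_smul_add_smul_homothety_two c x s]
  exact add_mem_add (smul_mem_smul_set hx) (smul_mem_smul_set (mem_image_of_mem _ hx))

theorem union_le_mul_homothety_inv_image (hμ : IsConvexMNC X μ) {B C : Set X} (hB : IsBounded B)
    (hC : IsCompact C) {c : X} (hc : c ∈ B) {l : ℝ} (hl₀ : 0 < l) (hl₁ : l < 1) :
    μ (B ∪ C) ≤ l * μ (homothety c l⁻¹ '' B) := by
  have hQ : IsCompact (homothety c (1 - l)⁻¹ '' insert c C) :=
    (hC.insert c).image (homothety_continuous c _)
  have h := hμ.le_of_subset_smul_add_smul ⟨c, Or.inl hc⟩ ⟨_, mem_image_of_mem _ hc⟩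
    ((insert_nonempty c C).image _) ((lipschitzWith_homothety c l⁻¹).isBounded_image hB)
    hQ.isBounded hl₀.le (by linarith) (by ring)
    (union_subset_smul_homothety_add_smul_homothety hc hl₀.ne' hl₁.ne)
  rwa [hμ.eq_zero_of_isCompact ((insert_nonempty c C).image _) hQ, mul_zero, add_zero] at h

theorem union_le_of_isCompact (hμ : IsConvexMNC X μ) {B C : Set X} (hBne : B.Nonempty)
    (hB : IsBounded B) (hC : IsCompact C) : μ (B ∪ C) ≤ μ B := by
  obtain ⟨c, hc⟩ := hBne
  set M := μ (homothety c (2 : ℝ) '' B)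
  have hbound : ∀ l ∈ Ioo (2⁻¹ : ℝ) 1, μ (B ∪ C) ≤ (2 * l - 1) * μ B + (1 - l) * M := by
    rintro l ⟨hl₂, hl₁⟩
    have hl₀ : 0 < l := lt_trans (by norm_num) hl₂
    have hinv₁ : 1 ≤ l⁻¹ := (one_le_inv₀ hl₀).mpr hl₁.le
    have hinv₂ : l⁻¹ ≤ 2 := inv_le_of_inv_le₀ (by norm_num) hl₂.le
    calc μ (B ∪ C) ≤ l * μ (homothety c l⁻¹ '' B) :=
          hμ.union_le_mul_homothety_inv_image hB hC hc hl₀ hl₁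
      _ ≤ l * ((2 - l⁻¹) * μ B + (l⁻¹ - 1) * M) :=
          mul_le_mul_of_nonneg_left (hμ.homothety_image_le ⟨c, hc⟩ hB c hinv₁ hinv₂) hl₀.le
      _ = (2 * l - 1) * μ B + (1 - l) * M := by field_simp
  have hlim : Tendsto (fun l : ℝ => (2 * l - 1) * μ B + (1 - l) * M) (𝓝[<] 1) (𝓝 (μ B)) := by
    refine tendsto_nhdsWithin_of_tendsto_nhds ?_
    convert (show Continuous fun l : ℝ => (2 * l - 1) * μ B + (1 - l) * M by fun_prop).tendsto 1
      using 2
    ring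
  refine ge_of_tendsto hlim ?_
  filter_upwards [Ioo_mem_nhdsLT (by norm_num : (2⁻¹ : ℝ) < 1)] using hbound

end IsConvexMNC

theorem convexMNC_union_compact_convex_eq_general {X : Type*} [NormedAddCommGroup X]
    [NormedSpace ℝ X] (μ : Set X → ℝ) (hμ : IsConvexMNC X μ)
    (B : Set X) (hBne : B.Nonempty) (hBbdd : IsBounded B)
    (C : Set X) (hCcpt : IsCompact C) :
    μ (B ∪ C) = μ B :=
  (hμ.union_le_of_isCompact hBne hBbdd hCcpt).antisymm
    (hμ.mono _ _ hBne (hBbdd.union hCcpt.isBounded) subset_union_left)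

/-- Negligibility of compact convex sets: `μ (B ∪ C) = μ B` for every nonempty bounded `B`
and every nonempty compact convex `C`. -/
theorem convexMNC_union_compact_convex_eq {X : Type*} [NormedAddCommGroup X]
    [NormedSpace ℝ X] [CompleteSpace X] (μ : Set X → ℝ) (hμ : IsConvexMNC X μ)
    (B : Set X) (hBne : B.Nonempty) (hBbdd : IsBounded B)
    (C : Set X) (hCne : C.Nonempty) (hCcpt : IsCompact C) (hCcvx : Convex ℝ C) :
    μ (B ∪ C) = μ B :=
  convexMNC_union_compact_convex_eq_general μ hμ B hBne hBbdd C hCcpt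
end

section
/- Let X be a real Banach space and I = [0,a]. Let G be a nonempty set of regulated functions g : I → X that is bounded and separable with respect to the supremum norm and equi-regulated. Then 𝕁_G : I → C_b(Ω) is strongly measurable. -/
open Set MeasureTheory Filter
open Topology
open scoped BoundedContinuousFunction

/-!
`𝕁_G` inherits equi-regularity from `G`, because `‖𝕁_G(t₁) - 𝕁_G(t₂)‖ ≤ sup_{g∈G} ‖g t₁ - g t₂‖`.
For a function on `[a,b]` whose oscillation on small one-sided neighbourhoods is small, the points
where it jumps by more than `ε` cannot accumulate: near an accumulation point `t₀` the function
oscillates by at most `ε` on one side of `t₀`, and the jump at a nearby point is realised there.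
So there are finitely many of them, `𝕁_G` is continuous off a countable, hence null, set, and
therefore strongly measurable.
-/

/-- `Ω`: the closed unit ball of the dual space `X*`, with the norm topology. -/
abbrev DualUnitBall (X : Type*) [NormedAddCommGroup X] [NormedSpace ℝ X] :
    Set (StrongDual ℝ X) :=
  Metric.closedBall 0 1

section Supremum

variable {ι : Type*} {u v : ι → ℝ} {ε : ℝ}

theorem ciSup_le_ciSup_add [Nonempty ι] (hv : BddAbove (range v)) (h : ∀ i, u i ≤ v i + ε) :
    ⨆ i, u i ≤ (⨆ i, v i) + ε :=
  ciSup_le fun i => (h i).trans (add_le_add_left (le_ciSup hv i) ε)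

theorem abs_ciSup_sub_ciSup_le (hu : BddAbove (range u)) (hv : BddAbove (range v))
    (hε : 0 ≤ ε) (h : ∀ i, |u i - v i| ≤ ε) : |(⨆ i, u i) - ⨆ i, v i| ≤ ε := by
  cases isEmpty_or_nonempty ι
  · simpa using hε
  refine abs_sub_le_iff.2 ⟨?_, ?_⟩
  · linarith [ciSup_le_ciSup_add (u := u) hv fun i => by linarith [(abs_le.1 (h i)).2]]
  · linarith [ciSup_le_ciSup_add (u := v) hu fun i => by linarith [(abs_le.1 (h i)).1]]

end Supremum

section DualUnitBall

variable {X : Type*} [NormedAddCommGroup X] [NormedSpace ℝ X]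

theorem norm_apply_le_of_mem_dualUnitBall (ω : DualUnitBall X) (x : X) :
    ‖(ω : StrongDual ℝ X) x‖ ≤ ‖x‖ := by
  simpa using (ω : StrongDual ℝ X).le_of_opNorm_le (mem_closedBall_zero_iff.1 ω.2) x

theorem dist_le_of_forall_norm_sub_le {ι : Type*} {x y : ι → X} {J₁ J₂ : DualUnitBall X →ᵇ ℝ}
    {M ε : ℝ} (hx : ∀ i, ‖x i‖ ≤ M) (hy : ∀ i, ‖y i‖ ≤ M)
    (hJ₁ : ∀ ω : DualUnitBall X, J₁ ω = ⨆ i, (ω : StrongDual ℝ X) (x i))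
    (hJ₂ : ∀ ω : DualUnitBall X, J₂ ω = ⨆ i, (ω : StrongDual ℝ X) (y i))
    (hε : 0 ≤ ε) (h : ∀ i, ‖x i - y i‖ ≤ ε) : dist J₁ J₂ ≤ ε := by
  have hbdd : ∀ (z : ι → X), (∀ i, ‖z i‖ ≤ M) → ∀ ω : DualUnitBall X,
      BddAbove (range fun i => (ω : StrongDual ℝ X) (z i)) := by
    rintro z hz ω
    refine ⟨M, forall_mem_range.2 fun i => ?_⟩
    exact (le_abs_self _).trans ((norm_apply_le_of_mem_dualUnitBall ω (z i)).trans (hz i))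
  refine (BoundedContinuousFunction.dist_le hε).2 fun ω => ?_
  rw [Real.dist_eq, hJ₁, hJ₂]
  refine abs_ciSup_sub_ciSup_le (hbdd x hx ω) (hbdd y hy ω) hε fun i => ?_
  rw [← map_sub, ← Real.norm_eq_abs]
  exact (norm_apply_le_of_mem_dualUnitBall ω _).trans (h i)

end DualUnitBall

section OneSidedCauchy

variable {E : Type*} [PseudoMetricSpace E] {f : ℝ → E} {a b ε : ℝ}

/-- The Cauchy form of "`f` is regulated on `[a,b]`": it is equivalent to the existence of all
one-sided limits when `E` is complete. -/
def OneSidedCauchyOn (f : ℝ → E) (a b : ℝ) : Prop :=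
  (∀ t ∈ Ioc a b, ∀ ε > 0, ∃ δ > 0, ∀ u ∈ Ioo (t - δ) t ∩ Icc a b, ∀ v ∈ Ioo (t - δ) t ∩ Icc a b,
    dist (f u) (f v) ≤ ε) ∧
  (∀ t ∈ Ico a b, ∀ ε > 0, ∃ δ > 0, ∀ u ∈ Ioo t (t + δ) ∩ Icc a b, ∀ v ∈ Ioo t (t + δ) ∩ Icc a b,
    dist (f u) (f v) ≤ ε)

def jumpSet (f : ℝ → E) (s : Set ℝ) (ε : ℝ) : Set ℝ :=
  {t ∈ s | ∃ᶠ u in 𝓝[s] t, ε < dist (f t) (f u)}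

theorem notMem_jumpSet_of_isOpen {s V : Set ℝ} {x : ℝ} (hV : IsOpen V) (hx : x ∈ V)
    (h : ∀ u ∈ V ∩ s, ∀ v ∈ V ∩ s, dist (f u) (f v) ≤ ε) : x ∉ jumpSet f s ε := by
  rintro ⟨hxs, hjump⟩
  obtain ⟨u, hεu, hu⟩ :=
    (hjump.and_eventually (inter_mem_nhdsWithin s (hV.mem_nhds hx))).exists
  exact (h x ⟨hx, hxs⟩ u hu.symm).not_gt hεu

namespace OneSidedCauchyOn

theorem eventually_nhdsNE_notMem_jumpSet (hf : OneSidedCauchyOn f a b) {t : ℝ}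
    (ht : t ∈ Icc a b) (hε : 0 < ε) : ∀ᶠ x in 𝓝[≠] t, x ∉ jumpSet f (Icc a b) ε := by
  rw [← nhdsLT_sup_nhdsGT, eventually_sup]
  constructor
  · rcases ht.1.eq_or_lt with rfl | hat
    · filter_upwards [self_mem_nhdsWithin] with x hx hjump using not_le.2 hx hjump.1.1
    obtain ⟨δ, hδ, hosc⟩ := hf.1 t ⟨hat, ht.2⟩ ε hε
    filter_upwards [Ioo_mem_nhdsLT (sub_lt_self t hδ)] with x hx
    exact notMem_jumpSet_of_isOpen isOpen_Ioo hx hosc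
  · rcases ht.2.eq_or_lt with rfl | htb
    · filter_upwards [self_mem_nhdsWithin] with x hx hjump using not_le.2 hx hjump.1.2
    obtain ⟨δ, hδ, hosc⟩ := hf.2 t ⟨ht.1, htb⟩ ε hε
    filter_upwards [Ioo_mem_nhdsGT (lt_add_of_pos_right t hδ)] with x hx
    exact notMem_jumpSet_of_isOpen isOpen_Ioo hx hosc

theorem finite_jumpSet (hf : OneSidedCauchyOn f a b) (hε : 0 < ε) :
    (jumpSet f (Icc a b) ε).Finite := by
  by_contra hinf
  obtain ⟨t, ht, hacc⟩ :=
    Set.Infinite.exists_accPt_of_subset_isCompact hinf isCompact_Icc fun _ hx => hx.1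
  exact accPt_iff_frequently_nhdsNE.1 hacc (hf.eventually_nhdsNE_notMem_jumpSet ht hε)

theorem countable_not_continuousWithinAt (hf : OneSidedCauchyOn f a b) :
    {t ∈ Icc a b | ¬ContinuousWithinAt f (Icc a b) t}.Countable := by
  refine (countable_iUnion fun n : ℕ =>
    (hf.finite_jumpSet (ε := 1 / (n + 1)) Nat.one_div_pos_of_nat).countable).mono ?_
  rintro t ⟨ht, hdisc⟩
  obtain ⟨ε, hε, hjump⟩ : ∃ ε > 0, ∃ᶠ u in 𝓝[Icc a b] t, ε ≤ dist (f u) (f t) := by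
    simpa [ContinuousWithinAt, Metric.tendsto_nhds] using hdisc
  obtain ⟨n, hn⟩ := exists_nat_one_div_lt hε
  refine mem_iUnion.2 ⟨n, ht, hjump.mono fun u hu => ?_⟩
  rw [dist_comm]
  exact hn.trans_le hu

end OneSidedCauchyOn

end OneSidedCauchy

theorem aestronglyMeasurable_restrict_of_countable_not_continuousWithinAt
    {α β : Type*} [MeasurableSpace α] [TopologicalSpace α] [OpensMeasurableSpace α]
    [MeasurableSingletonClass α] [TopologicalSpace β] [TopologicalSpace.PseudoMetrizableSpace β]
    [SecondCountableTopologyEither α β] {μ : Measure α} [NullSingletonClass μ]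
    {f : α → β} {s : Set α}
    (hs : MeasurableSet s) (hf : {x ∈ s | ¬ContinuousWithinAt f s x}.Countable) :
    AEStronglyMeasurable f (μ.restrict s) := by
  set C := {x ∈ s | ¬ContinuousWithinAt f s x}
  have hcont : ContinuousOn f (s \ C) := fun x hx =>
    (not_not.1 fun h => hx.2 ⟨hx.1, h⟩).mono sdiff_subset
  rw [← Measure.restrict_congr_set (sdiff_ae_eq_self.2 (measure_mono_null inter_subset_right
    (hf.measure_zero μ)))]
  exact hcont.aestronglyMeasurable (hs.diff hf.measurableSet)

theorem JG_stronglyMeasurable_of_equiregulated_general {X : Type*} [NormedAddCommGroup X]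
    [NormedSpace ℝ X] (a : ℝ)
    (G : Set (ℝ → X))
    -- `G` is bounded in supremum norm
    (hGbdd : ∃ M : ℝ, ∀ g ∈ G, ∀ t ∈ Icc (0 : ℝ) a, ‖g t‖ ≤ M)
    -- `G` is equi-regulated
    (hGequi_left : ∀ t ∈ Ioc (0 : ℝ) a, ∀ ε : ℝ, 0 < ε → ∃ δ : ℝ, 0 < δ ∧
      ∀ g ∈ G, ∀ t₁ ∈ Ioo (t - δ) t ∩ Icc (0 : ℝ) a, ∀ t₂ ∈ Ioo (t - δ) t ∩ Icc (0 : ℝ) a,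
        ‖g t₂ - g t₁‖ ≤ ε)
    (hGequi_right : ∀ t ∈ Ico (0 : ℝ) a, ∀ ε : ℝ, 0 < ε → ∃ δ : ℝ, 0 < δ ∧
      ∀ g ∈ G, ∀ t₁ ∈ Ioo t (t + δ) ∩ Icc (0 : ℝ) a, ∀ t₂ ∈ Ioo t (t + δ) ∩ Icc (0 : ℝ) a,
        ‖g t₂ - g t₁‖ ≤ ε)
    (JG : ℝ → BoundedContinuousFunction (DualUnitBall X) ℝ)
    (hJG_eq : ∀ t ∈ Icc (0 : ℝ) a, ∀ ω : DualUnitBall X,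
      JG t ω = ⨆ g : G, (ω : StrongDual ℝ X) ((g : ℝ → X) t)) :
    AEStronglyMeasurable JG (volume.restrict (Icc 0 a)) := by
  obtain ⟨M, hM⟩ := hGbdd
  have hdist : ∀ t₁ ∈ Icc (0 : ℝ) a, ∀ t₂ ∈ Icc (0 : ℝ) a, ∀ ε : ℝ, 0 ≤ ε →
      (∀ g ∈ G, ‖g t₁ - g t₂‖ ≤ ε) → dist (JG t₁) (JG t₂) ≤ ε :=
    fun t₁ ht₁ t₂ ht₂ ε hε h =>
      dist_le_of_forall_norm_sub_le (x := fun g : G => (g : ℝ → X) t₁)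
        (y := fun g : G => (g : ℝ → X) t₂) (fun g => hM g g.2 t₁ ht₁)
        (fun g => hM g g.2 t₂ ht₂) (hJG_eq t₁ ht₁) (hJG_eq t₂ ht₂) hε fun g => h g g.2
  have hJG : OneSidedCauchyOn JG 0 a := by
    refine ⟨fun t ht ε hε => ?_, fun t ht ε hε => ?_⟩
    · obtain ⟨δ, hδ, hosc⟩ := hGequi_left t ht ε hε
      exact ⟨δ, hδ, fun u hu v hv => hdist u hu.2 v hv.2 ε hε.le fun g hg => hosc g hg v hv u hu⟩
    · obtain ⟨δ, hδ, hosc⟩ := hGequi_right t ht ε hε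
      exact ⟨δ, hδ, fun u hu v hv => hdist u hu.2 v hv.2 ε hε.le fun g hg => hosc g hg v hv u hu⟩
  exact aestronglyMeasurable_restrict_of_countable_not_continuousWithinAt measurableSet_Icc
    hJG.countable_not_continuousWithinAt

/-- If `G` is a nonempty family of regulated functions `[0,a] → X` which is bounded and
separable in supremum norm and equi-regulated, then `𝕁_G : [0,a] → C_b(Ω)` (given by
`𝕁_G(t)(x*) = sup_{g∈G} x*(g t)`) is strongly measurable. -/
theorem JG_stronglyMeasurable_of_equiregulated {X : Type*} [NormedAddCommGroup X]
    [NormedSpace ℝ X] [CompleteSpace X] (a : ℝ) (ha : 0 < a)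
    (G : Set (ℝ → X)) (hGne : G.Nonempty)
    -- every `g ∈ G` is regulated on `[0,a]`: one-sided limits exist
    (hGreg_right : ∀ g ∈ G, ∀ t ∈ Ico (0 : ℝ) a,
      ∃ L : X, Tendsto g (nhdsWithin t (Ioi t)) (nhds L))
    (hGreg_left : ∀ g ∈ G, ∀ t ∈ Ioc (0 : ℝ) a,
      ∃ L : X, Tendsto g (nhdsWithin t (Iio t)) (nhds L))
    -- `G` is bounded in supremum norm
    (hGbdd : ∃ M : ℝ, ∀ g ∈ G, ∀ t ∈ Icc (0 : ℝ) a, ‖g t‖ ≤ M)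
    -- `G` is separable with respect to the supremum norm
    (hGsep : ∃ D : Set (ℝ → X), D.Countable ∧ D ⊆ G ∧
      ∀ g ∈ G, ∀ ε : ℝ, 0 < ε → ∃ h ∈ D, ∀ t ∈ Icc (0 : ℝ) a, ‖g t - h t‖ ≤ ε)
    -- `G` is equi-regulated
    (hGequi_left : ∀ t ∈ Ioc (0 : ℝ) a, ∀ ε : ℝ, 0 < ε → ∃ δ : ℝ, 0 < δ ∧
      ∀ g ∈ G, ∀ t₁ ∈ Ioo (t - δ) t ∩ Icc (0 : ℝ) a, ∀ t₂ ∈ Ioo (t - δ) t ∩ Icc (0 : ℝ) a,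
        ‖g t₂ - g t₁‖ ≤ ε)
    (hGequi_right : ∀ t ∈ Ico (0 : ℝ) a, ∀ ε : ℝ, 0 < ε → ∃ δ : ℝ, 0 < δ ∧
      ∀ g ∈ G, ∀ t₁ ∈ Ioo t (t + δ) ∩ Icc (0 : ℝ) a, ∀ t₂ ∈ Ioo t (t + δ) ∩ Icc (0 : ℝ) a,
        ‖g t₂ - g t₁‖ ≤ ε)
    (JG : ℝ → BoundedContinuousFunction (DualUnitBall X) ℝ)
    (hJG_eq : ∀ t ∈ Icc (0 : ℝ) a, ∀ ω : DualUnitBall X,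
      JG t ω = ⨆ g : G, (ω : StrongDual ℝ X) ((g : ℝ → X) t)) :
    AEStronglyMeasurable JG (volume.restrict (Icc 0 a)) :=
  JG_stronglyMeasurable_of_equiregulated_general a G hGbdd hGequi_left hGequi_right JG hJG_eq
end
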